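/- Let X ⊆ Y and Z be finite sets of variables, and for each finite set U of variables let R_U be a finite set of functions with domain U, such that for all U ⊆ W the projection π_U maps R_W into R_U. Suppose moreover that R_{Y∪Z} ⊆ R_Y ⋈ R_Z (every function in R_{Y∪Z} is the join of its restrictions to Y and Z, which lie in R_Y and R_Z). Then maxdeg(X, Y) ≥ maxdeg(X ∪ Z, Y ∪ Z), where maxdeg(U, W) := max_{g ∈ R_U} |{h ∈ R_W : π_U(h) = g}| (with the convention maxdeg = 0 if R_U is empty). -/

import Mathlib

/-!
Restriction to `Y` maps the fibre of `R (Y ∪ Z)` over `g ∈ R (X ∪ Z)` injectively into the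
fibre of `R Y` over `g|_X`: a tuple on `Y ∪ Z` is determined by its restrictions to `Y` and to
`Z`, and all tuples of the first fibre have the same restriction `g|_Z` to `Z`.
-/

namespace PartialTuple

variable {V β : Type*} [DecidableEq V] [Inhabited β]

def restrict (U : Finset V) (f : V → β) : V → β :=
  U.piecewise f default

theorem restrict_restrict_of_subset {U W : Finset V} (hUW : U ⊆ W) (f : V → β) :
    restrict U (restrict W f) = restrict U f :=
  Finset.piecewise_piecewise_of_subset_left hUW _ _ _

theorem restrict_union_eq_of_restrict_eq {Y Z : Finset V} {f₁ f₂ : V → β}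
    (hY : restrict Y f₁ = restrict Y f₂) (hZ : restrict Z f₁ = restrict Z f₂) :
    restrict (Y ∪ Z) f₁ = restrict (Y ∪ Z) f₂ := by
  funext v
  by_cases hvY : v ∈ Y
  · simpa [restrict, hvY] using congrFun hY v
  · by_cases hvZ : v ∈ Z
    · simpa [restrict, hvZ] using congrFun hZ v
    · simp [restrict, hvY, hvZ]

variable (R : Finset V → Finset (V → β))

def IsSupported : Prop :=
  ∀ U, ∀ f ∈ R U, restrict U f = f

def IsRestrictionClosed : Prop :=
  ∀ U W, U ⊆ W → ∀ f ∈ R W, restrict U f ∈ R U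

variable [DecidableEq (V → β)]

def fiber (U W : Finset V) (g : V → β) : Finset (V → β) :=
  (R W).filter fun h => restrict U h = g

def maxDegree (U W : Finset V) : ℕ :=
  (R U).sup fun g => (fiber R U W g).card

variable {R} {X Y Z : Finset V}

theorem mapsTo_restrict_fiber (hR : IsRestrictionClosed R) (hXY : X ⊆ Y) (g : V → β) :
    Set.MapsTo (restrict Y) (fiber R (X ∪ Z) (Y ∪ Z) g : Set (V → β)) (fiber R X Y (restrict X g)) := by
  intro h hh
  obtain ⟨hhR, rfl⟩ := Finset.mem_filter.mp hh
  refine Finset.mem_filter.mpr ⟨hR Y _ Finset.subset_union_left h hhR, ?_⟩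
  rw [restrict_restrict_of_subset hXY, restrict_restrict_of_subset Finset.subset_union_left]

theorem injOn_restrict_fiber (hR : IsSupported R) (g : V → β) :
    Set.InjOn (restrict Y) (fiber R (X ∪ Z) (Y ∪ Z) g : Set (V → β)) := by
  intro h₁ hh₁ h₂ hh₂ hY
  obtain ⟨hR₁, hg₁⟩ := Finset.mem_filter.mp hh₁
  obtain ⟨hR₂, hg₂⟩ := Finset.mem_filter.mp hh₂
  have hZ : restrict Z h₁ = restrict Z h₂ := by
    rw [← restrict_restrict_of_subset (Finset.subset_union_right (s₁ := X)) h₁,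
      ← restrict_restrict_of_subset (Finset.subset_union_right (s₁ := X)) h₂, hg₁, hg₂]
  rw [← hR _ _ hR₁, ← hR _ _ hR₂]
  exact restrict_union_eq_of_restrict_eq hY hZ

theorem maxDegree_union_le (hsupp : IsSupported R) (hclosed : IsRestrictionClosed R)
    (hXY : X ⊆ Y) : maxDegree R (X ∪ Z) (Y ∪ Z) ≤ maxDegree R X Y := by
  refine Finset.sup_le fun g hg => ?_
  calc (fiber R (X ∪ Z) (Y ∪ Z) g).card
      ≤ (fiber R X Y (restrict X g)).card :=
        Finset.card_le_card_of_injOn _ (mapsTo_restrict_fiber hclosed hXY g)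
          (injOn_restrict_fiber hsupp g)
    _ ≤ maxDegree R X Y :=
        Finset.le_sup (f := fun g => (fiber R X Y g).card)
          (hclosed X _ Finset.subset_union_left g hg)

end PartialTuple

open PartialTuple in
theorem maxdeg_antitone_join_general {V β : Type*} [DecidableEq V] [DecidableEq (V → β)] [Inhabited β]
    (proj : Finset V → (V → β) → (V → β))
    (hproj : ∀ (U : Finset V) (f : V → β),
        proj U f = fun v => if v ∈ U then f v else default)
    (R : Finset V → Finset (V → β))
    (hsupp : ∀ (U : Finset V), ∀ f ∈ R U, proj U f = f)
    (hclosed : ∀ (U W : Finset V), U ⊆ W → ∀ f ∈ R W, proj U f ∈ R U)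
    (X Y Z : Finset V) (hXY : X ⊆ Y)
    (maxdeg : Finset V → Finset V → ℕ)
    (hmaxdeg : ∀ (U W : Finset V),
        maxdeg U W = (R U).sup (fun g => ((R W).filter (fun h => proj U h = g)).card)) :
    maxdeg X Y ≥ maxdeg (X ∪ Z) (Y ∪ Z) := by
  obtain rfl : proj = restrict := funext fun U => funext fun f => hproj U f
  rw [hmaxdeg, hmaxdeg]
  exact maxDegree_union_le hsupp hclosed hXY

/-- Functions with domain `U ⊆ V` are modelled as total functions `V → β`
that take the value `default` outside of `U`; `proj U f` is the restriction. -/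
theorem maxdeg_antitone_join {V β : Type*} [DecidableEq V] [DecidableEq (V → β)] [Inhabited β]
    (proj : Finset V → (V → β) → (V → β))
    (hproj : ∀ (U : Finset V) (f : V → β),
        proj U f = fun v => if v ∈ U then f v else default)
    (R : Finset V → Finset (V → β))
    (hsupp : ∀ (U : Finset V), ∀ f ∈ R U, proj U f = f)
    (hclosed : ∀ (U W : Finset V), U ⊆ W → ∀ f ∈ R W, proj U f ∈ R U)
    (X Y Z : Finset V) (hXY : X ⊆ Y)
    (hjoin : ∀ f ∈ R (Y ∪ Z), proj Y f ∈ R Y ∧ proj Z f ∈ R Z)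
    (maxdeg : Finset V → Finset V → ℕ)
    (hmaxdeg : ∀ (U W : Finset V),
        maxdeg U W = (R U).sup (fun g => ((R W).filter (fun h => proj U h = g)).card)) :
    maxdeg X Y ≥ maxdeg (X ∪ Z) (Y ∪ Z) :=
  maxdeg_antitone_join_general proj hproj R hsupp hclosed X Y Z hXY maxdeg hmaxdeg
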